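/- arXiv:math/0105176 — 2 statements merged into one kernel-verified Lean document; each statement's English description precedes it below -/
import Mathlib

section
/- For every integer p ≥ 1, there exists a polynomial A_p(t,δ) ∈ ℚ[t,δ] of degree ≤ p−1 in t such that the identity (y − δx)^p − (1−δ)^p x^p = (y − x) ∫₀¹ A_p(t,δ) ((1−t)x + ty)^{p−1} dt holds in ℝ[x,y,δ], i.e. for all real x, y, δ. -/
/-!
Put `u = y - x` and `w = (1 - δ) x`. Expanding `((1 - t) x + t y)^(p-1) = (x + t u)^(p-1)` and
`(u + w)^p - w^p` binomially, both sides become `u * ∑_{k < p} C(p-1,k) u^k x^(p-1-k) c_k`, where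
`c_k = ∫₀¹ A_p(t,δ) t^k dt` on the right and `c_k = p/(k+1) (1-δ)^(p-1-k)` on the left. So it
suffices to prescribe the first `p` moments of a polynomial of degree `< p`, coefficientwise in `δ`.
That linear system has the Hilbert matrix `1/(i+j+1)` as its matrix, which is invertible: a
polynomial `P` with vanishing moments has `∫₀¹ P² = 0`, hence `P = 0`. The system being rational,
so is its solution.
-/

open Polynomial Finset intervalIntegral
open scoped Matrix

theorem integral_eval_sq_pos {P : ℝ[X]} (hP : P ≠ 0) : 0 < ∫ t in (0:ℝ)..1, P.eval t ^ 2 := by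
  rw [integral_pos_iff_support_of_nonneg_ae (.of_forall fun t => sq_nonneg _)
    ((by fun_prop : Continuous fun t => P.eval t ^ 2).intervalIntegrable 0 1)]
  refine ⟨zero_lt_one, ?_⟩
  have hroots : MeasureTheory.volume {t | P.IsRoot t} = 0 :=
    (finite_setOfPred_isRoot hP).measure_zero _
  calc 0 < MeasureTheory.volume (Set.Ioc (0:ℝ) 1) := by simp
    _ = MeasureTheory.volume (Set.Ioc 0 1 \ {t | P.IsRoot t}) :=
      (MeasureTheory.measure_sdiff_null hroots).symm
    _ ≤ _ := by
      refine MeasureTheory.measure_mono fun t ⟨h01, hroot⟩ => ?_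
      exact ⟨pow_ne_zero 2 hroot, h01⟩

theorem integral_eval_mul_pow {P : ℝ[X]} {n : ℕ} (hP : P.natDegree < n) (k : ℕ) :
    ∫ t in (0:ℝ)..1, P.eval t * t ^ k = ∑ i ∈ range n, P.coeff i / (i + k + 1) := by
  simp_rw [eval_eq_sum_range' hP, sum_mul]
  rw [integral_finsetSum fun i _ => Continuous.intervalIntegrable (by fun_prop) _ _]
  refine sum_congr rfl fun i _ => ?_
  simp_rw [mul_assoc, ← pow_add]
  rw [integral_const_mul, integral_pow]
  push_cast
  ring

theorem eq_zero_of_integral_eval_mul_pow_eq_zero {P : ℝ[X]} {n : ℕ} (hP : P.natDegree < n)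
    (h : ∀ k < n, ∫ t in (0:ℝ)..1, P.eval t * t ^ k = 0) : P = 0 := by
  by_contra hne
  have hsq : ∫ t in (0:ℝ)..1, P.eval t ^ 2 =
      ∑ i ∈ range n, P.coeff i * ∫ t in (0:ℝ)..1, P.eval t * t ^ i := by
    simp_rw [← integral_const_mul]
    rw [← integral_finsetSum fun i _ => Continuous.intervalIntegrable (by fun_prop) _ _]
    refine integral_congr fun t _ => ?_
    simp_rw [sq, mul_left_comm (P.coeff _), ← mul_sum, ← eval_eq_sum_range' hP]
  rw [sum_eq_zero fun i hi => by rw [h i (mem_range.1 hi), mul_zero]] at hsq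
  exact (integral_eval_sq_pos hne).ne' hsq

def hilbertMatrix (n : ℕ) : Matrix (Fin n) (Fin n) ℚ := Matrix.of fun i j => ((i : ℚ) + j + 1)⁻¹

theorem integral_eval_ofFn_mul_pow {n : ℕ} (v : Fin n → ℚ) (k : Fin n) :
    ∫ t in (0:ℝ)..1, ((ofFn n v).map (algebraMap ℚ ℝ)).eval t * t ^ (k : ℕ) =
      (hilbertMatrix n *ᵥ v) k := by
  rw [integral_eval_mul_pow (natDegree_map_le.trans_lt (ofFn_natDegree_lt k.pos v)),
    ← Fin.sum_univ_eq_sum_range]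
  simp only [hilbertMatrix, Matrix.mulVec, dotProduct, Matrix.of_apply, Rat.cast_sum]
  refine sum_congr rfl fun j _ => ?_
  rw [coeff_map, ofFn_coeff_eq_val_of_lt v j.isLt, eq_ratCast]
  push_cast
  ring

theorem hilbertMatrix_mulVec_eq_zero {n : ℕ} {v : Fin n → ℚ} (hv : hilbertMatrix n *ᵥ v = 0) :
    v = 0 := by
  rcases n.eq_zero_or_pos with rfl | hn
  · exact Subsingleton.elim _ _
  have hP : (ofFn n v).map (algebraMap ℚ ℝ) = 0 :=
    eq_zero_of_integral_eval_mul_pow_eq_zero (natDegree_map_le.trans_lt (ofFn_natDegree_lt hn v))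
      fun k hk => by rw [integral_eval_ofFn_mul_pow v ⟨k, hk⟩, hv]; simp
  rw [Polynomial.map_eq_zero_iff (algebraMap ℚ ℝ).injective] at hP
  exact injective_ofFn n (hP.trans (ofFn_zero n).symm)

theorem hilbertMatrix_mulVec_surjective (n : ℕ) : Function.Surjective (hilbertMatrix n).mulVec := by
  rw [Matrix.mulVec_surjective_iff_isUnit, ← Matrix.mulVec_injective_iff_isUnit]
  exact (injective_iff_map_eq_zero (hilbertMatrix n).mulVecLin).2
    fun _ => hilbertMatrix_mulVec_eq_zero

theorem exists_natDegree_le_integral_eval_mul_pow_eq (n : ℕ) (μ : ℕ → ℚ) :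
    ∃ a : ℚ[X], a.natDegree ≤ n ∧
      ∀ k ≤ n, ∫ t in (0:ℝ)..1, (a.map (algebraMap ℚ ℝ)).eval t * t ^ k = μ k := by
  obtain ⟨v, hv⟩ := hilbertMatrix_mulVec_surjective (n + 1) fun k => μ k
  refine ⟨ofFn (n + 1) v, Nat.lt_succ_iff.1 (ofFn_natDegree_lt n.succ_pos v), fun k hk => ?_⟩
  rw [← Nat.lt_succ_iff] at hk
  simpa [hv] using integral_eval_ofFn_mul_pow v ⟨k, hk⟩

theorem exists_integral_mul_pow_eq_eval (n d : ℕ) (R : ℕ → ℚ[X])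
    (hR : ∀ k ≤ n, (R k).natDegree ≤ d) :
    ∃ a : Fin (d + 1) → ℚ[X], (∀ m, (a m).natDegree ≤ n) ∧ ∀ (δ : ℝ), ∀ k ≤ n,
      ∫ t in (0:ℝ)..1,
          (∑ m : Fin (d + 1), ((a m).map (algebraMap ℚ ℝ)).eval t * δ ^ (m : ℕ)) * t ^ k =
        ((R k).map (algebraMap ℚ ℝ)).eval δ := by
  choose a ha_deg ha_mom using fun m : Fin (d + 1) =>
    exists_natDegree_le_integral_eval_mul_pow_eq n fun k => (R k).coeff m
  refine ⟨a, ha_deg, fun δ k hk => ?_⟩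
  simp_rw [sum_mul, mul_right_comm _ (δ ^ _)]
  rw [integral_finsetSum fun m _ => Continuous.intervalIntegrable (by fun_prop) _ _,
    eval_eq_sum_range' (natDegree_map_le.trans_lt (Nat.lt_succ_of_le (hR k hk))),
    ← Fin.sum_univ_eq_sum_range]
  refine sum_congr rfl fun m _ => ?_
  rw [integral_mul_const, ha_mom m k hk, coeff_map, eq_ratCast]

theorem add_pow_succ_sub_pow {K : Type*} [Field K] [CharZero K] (u w : K) (n : ℕ) :
    (u + w) ^ (n + 1) - w ^ (n + 1) =
      u * ∑ k ∈ range (n + 1), (n + 1) / (k + 1) * n.choose k * u ^ k * w ^ (n - k) := by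
  rw [add_pow, sum_range_succ', mul_sum]
  simp only [pow_zero, one_mul, Nat.sub_zero, Nat.choose_zero_right, Nat.cast_one, mul_one,
    add_sub_cancel_right]
  refine sum_congr rfl fun k _ => ?_
  have hchoose : ((n + 1).choose (k + 1) : K) = (n + 1) / (k + 1) * n.choose k := by
    rw [div_mul_eq_mul_div, eq_div_iff (Nat.cast_add_one_ne_zero k)]
    exact_mod_cast (Nat.add_one_mul_choose_eq n k).symm
  rw [hchoose, Nat.add_sub_add_right, pow_succ]
  ring

theorem integral_mul_affine_pow (A : ℝ → ℝ) (hA : Continuous A) (x y : ℝ) (n : ℕ) :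
    ∫ t in (0:ℝ)..1, A t * ((1 - t) * x + t * y) ^ n =
      ∑ k ∈ range (n + 1),
        n.choose k * (y - x) ^ k * x ^ (n - k) * ∫ t in (0:ℝ)..1, A t * t ^ k := by
  have hexpand : ∀ t : ℝ, A t * ((1 - t) * x + t * y) ^ n =
      ∑ k ∈ range (n + 1), n.choose k * (y - x) ^ k * x ^ (n - k) * (A t * t ^ k) := fun t => by
    rw [show (1 - t) * x + t * y = t * (y - x) + x by ring, add_pow, mul_sum]
    exact sum_congr rfl fun k _ => by rw [mul_pow]; ring
  simp_rw [hexpand]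
  rw [integral_finsetSum fun k _ => Continuous.intervalIntegrable (by fun_prop) _ _]
  simp_rw [integral_const_mul]

/-- polynomial identity (4.5). For every `p ≥ 1` there exists a polynomial
`A_p(t,δ) = ∑_{0 ≤ m ≤ p} a_m(t) δ^m` with `a_m ∈ ℚ[t]` of degree ≤ p−1, such that
`(y − δx)^p − (1−δ)^p x^p = (y−x) ∫₀¹ A_p(t,δ) ((1−t)x + ty)^{p−1} dt` for all real `x, y, δ`. -/
theorem stmt_0 (p : ℕ) (hp : 1 ≤ p) :
    ∃ a : Fin (p + 1) → Polynomial ℚ,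
      (∀ m, (a m).natDegree ≤ p - 1) ∧
      ∀ x y δ : ℝ,
        (y - δ * x) ^ p - (1 - δ) ^ p * x ^ p =
          (y - x) * ∫ t in (0:ℝ)..1,
            (∑ m : Fin (p + 1), ((a m).map (algebraMap ℚ ℝ)).eval t * δ ^ (m : ℕ)) *
              ((1 - t) * x + t * y) ^ (p - 1) := by
  obtain ⟨n, rfl⟩ := Nat.exists_eq_add_of_le' hp
  obtain ⟨a, ha_deg, ha_mom⟩ := exists_integral_mul_pow_eq_eval n (n + 1)
    (fun k => C ((n + 1 : ℚ) / (k + 1)) * (1 - X) ^ (n - k)) fun k _ => by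
      compute_degree
      omega
  refine ⟨a, ha_deg, fun x y δ => ?_⟩
  rw [Nat.add_sub_cancel, integral_mul_affine_pow _ (by fun_prop) x y n,
    show y - δ * x = (y - x) + (1 - δ) * x by ring, ← mul_pow, add_pow_succ_sub_pow]
  congr 1
  refine sum_congr rfl fun k hk => ?_
  rw [ha_mom δ k (Nat.lt_succ_iff.1 (mem_range.1 hk))]
  simp only [Polynomial.map_mul, Polynomial.map_pow, Polynomial.map_sub, map_C, Polynomial.map_one,
    map_X, eval_mul, eval_C, eval_pow, eval_sub, eval_one, eval_X, mul_pow]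
  push_cast
  ring
end

section
/- Let n ≥ 1. The set of positive definite hermitian n×n matrices is a connected component of the open set {A hermitian : det A > 0} inside the real vector space of hermitian n×n matrices. -/
/-!
Positive definite hermitian matrices form a convex, hence connected, set on which the
determinant is positive. This set is open among hermitian matrices, because positivity of the
quadratic form on the compact unit sphere survives small perturbations, and it is relatively
closed in `{det > 0}`: a limit of positive definite matrices is positive semidefinite, and a
positive semidefinite matrix with nonzero determinant is positive definite.
-/

open scoped ComplexOrder
open Matrix Set Filter Topology

theorem connectedComponentIn_eq_of_isOpen_of_closure_inter_subset {X : Type*}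
    [TopologicalSpace X] {S U : Set X} {x : X} (hUS : U ⊆ S) (hU : IsPreconnected U)
    (hUo : IsOpen U) (hSU : S ∩ closure U ⊆ U) (hx : x ∈ U) :
    connectedComponentIn S x = U := by
  refine subset_antisymm ?_ (hU.subset_connectedComponentIn hx hUS)
  have hcover : connectedComponentIn S x ⊆ U ∪ (closure U)ᶜ := fun y hy => by
    by_cases hyU : y ∈ closure U
    · exact Or.inl (hSU ⟨connectedComponentIn_subset S x hy, hyU⟩)
    · exact Or.inr hyU
  exact isPreconnected_connectedComponentIn.subset_left_of_subset_union hUo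
    isClosed_closure.isOpen_compl (disjoint_compl_right_iff_subset.mpr subset_closure) hcover
    ⟨x, mem_connectedComponentIn (hUS hx), hx⟩

namespace Matrix

variable {n 𝕜 : Type*} [RCLike 𝕜]

theorem convex_setOf_posDef : Convex ℝ {A : Matrix n n 𝕜 | A.PosDef} := by
  intro A hA B hB a b ha hb hab
  rcases ha.eq_or_lt with rfl | ha
  · simpa [show b = 1 by linarith] using hB
  exact (hA.smul ha).add_posSemidef (hB.posSemidef.smul hb)

theorem isPreconnected_setOf_posDef :
    IsPreconnected {A : {A : Matrix n n 𝕜 // A.IsHermitian} | A.1.PosDef} := by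
  refine Topology.IsInducing.subtypeVal.isPreconnected_image.mp ?_
  convert (convex_setOf_posDef (n := n) (𝕜 := 𝕜)).isPreconnected
  ext A
  exact ⟨by rintro ⟨A, hA, rfl⟩; exact hA, fun hA => ⟨⟨A, hA.1⟩, hA, rfl⟩⟩

variable [Fintype n]

theorem IsHermitian.posDef_of_forall_mem_sphere {A : Matrix n n 𝕜} (hA : A.IsHermitian)
    (h : ∀ u ∈ Metric.sphere (0 : n → 𝕜) 1, 0 < RCLike.re (star u ⬝ᵥ A *ᵥ u)) :
    A.PosDef := by
  refine .of_dotProduct_mulVec_pos hA fun x hx => RCLike.pos_iff.mpr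
    ⟨?_, hA.im_star_dotProduct_mulVec_self x⟩
  set c : ℝ := ‖x‖
  have hc : 0 < c := norm_pos_iff.mpr hx
  set u : n → 𝕜 := (c⁻¹ : 𝕜) • x
  have hu : u ∈ Metric.sphere (0 : n → 𝕜) 1 := by
    simp [u, norm_smul, c, inv_mul_cancel₀ hc.ne']
  have hxu : x = (c : 𝕜) • u := by
    simp [u, smul_smul, hc.ne']
  have hquad : star x ⬝ᵥ A *ᵥ x = ((c ^ 2 : ℝ) : 𝕜) * (star u ⬝ᵥ A *ᵥ u) := by
    rw [hxu, star_smul, mulVec_smul, dotProduct_smul, smul_dotProduct, RCLike.star_def,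
      RCLike.conj_ofReal, smul_eq_mul, smul_eq_mul]
    push_cast; ring
  rw [hquad, RCLike.re_ofReal_mul]
  exact mul_pos (pow_pos hc 2) (h u hu)

theorem isOpen_setOf_posDef :
    IsOpen {A : {A : Matrix n n 𝕜 // A.IsHermitian} | A.1.PosDef} := by
  refine isOpen_iff_mem_nhds.mpr fun A hA => ?_
  have hquad : Continuous fun p : Matrix n n 𝕜 × (n → 𝕜) =>
      RCLike.re (star p.2 ⬝ᵥ p.1 *ᵥ p.2) :=
    RCLike.continuous_re.comp
      ((continuous_star.comp continuous_snd).dotProduct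
        (continuous_fst.matrix_mulVec continuous_snd))
  have hnear : ∀ᶠ B in 𝓝 A.1, ∀ u ∈ Metric.sphere (0 : n → 𝕜) 1,
      0 < RCLike.re (star u ⬝ᵥ B *ᵥ u) :=
    (isCompact_sphere 0 1).eventually_forall_of_forall_eventually fun u hu =>
      (isOpen_lt continuous_const hquad).mem_nhds
        (hA.re_dotProduct_pos (ne_zero_of_mem_unit_sphere ⟨u, hu⟩))
  exact mem_of_superset (continuous_subtype_val.continuousAt.preimage_mem_nhds hnear)
    fun B hB => B.2.posDef_of_forall_mem_sphere hB

theorem isClosed_setOf_posSemidef :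
    IsClosed {A : {A : Matrix n n 𝕜 // A.IsHermitian} | A.1.PosSemidef} := by
  have h : {A : {A : Matrix n n 𝕜 // A.IsHermitian} | A.1.PosSemidef} =
      ⋂ x : n → 𝕜, {A | 0 ≤ star x ⬝ᵥ A.1 *ᵥ x} := by
    ext A
    simp [posSemidef_iff_dotProduct_mulVec, A.2]
  rw [h]
  exact isClosed_iInter fun x => isClosed_le continuous_const
    (continuous_const.dotProduct (continuous_subtype_val.matrix_mulVec continuous_const))

end Matrix

theorem stmt_4_general (n : ℕ) :
    ∃ A₀ ∈ {A : {A : Matrix (Fin n) (Fin n) ℂ // A.IsHermitian} |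
        ∃ r : ℝ, 0 < r ∧ A.1.det = (r : ℂ)},
      connectedComponentIn
        {A : {A : Matrix (Fin n) (Fin n) ℂ // A.IsHermitian} |
          ∃ r : ℝ, 0 < r ∧ A.1.det = (r : ℂ)} A₀ =
      {A : {A : Matrix (Fin n) (Fin n) ℂ // A.IsHermitian} | A.1.PosDef} := by
  set S := {A : {A : Matrix (Fin n) (Fin n) ℂ // A.IsHermitian} |
    ∃ r : ℝ, 0 < r ∧ A.1.det = (r : ℂ)}
  have hPS : {A : {A : Matrix (Fin n) (Fin n) ℂ // A.IsHermitian} | A.1.PosDef} ⊆ S :=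
    fun A hA => by
      obtain ⟨r, hr, hdet⟩ := RCLike.pos_iff_exists_ofReal.mp hA.det_pos
      exact ⟨r, hr, hdet.symm⟩
  have hSP : S ∩ closure {A | A.1.PosDef} ⊆ {A | A.1.PosDef} := by
    rintro A ⟨⟨r, hr, hdet⟩, hA⟩
    have hpsd : A.1.PosSemidef :=
      closure_minimal (fun B hB => PosDef.posSemidef hB) isClosed_setOf_posSemidef hA
    exact hpsd.posDef_iff_det_ne_zero.mpr (by rw [hdet]; exact_mod_cast hr.ne')
  have hone : (1 : Matrix (Fin n) (Fin n) ℂ).PosDef := PosDef.one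
  exact ⟨⟨1, isHermitian_one⟩, hPS hone,
    connectedComponentIn_eq_of_isOpen_of_closure_inter_subset hPS isPreconnected_setOf_posDef
      isOpen_setOf_posDef hSP hone⟩

/-- inside the (real topological vector) space of hermitian `n×n` matrices,
the set of positive definite matrices is a connected component of the open set
`{A hermitian : det A > 0}` (det of a hermitian matrix being a positive real number). -/
theorem stmt_4 (n : ℕ) (hn : 1 ≤ n) :
    ∃ A₀ ∈ {A : {A : Matrix (Fin n) (Fin n) ℂ // A.IsHermitian} |
        ∃ r : ℝ, 0 < r ∧ A.1.det = (r : ℂ)},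
      connectedComponentIn
        {A : {A : Matrix (Fin n) (Fin n) ℂ // A.IsHermitian} |
          ∃ r : ℝ, 0 < r ∧ A.1.det = (r : ℂ)} A₀ =
      {A : {A : Matrix (Fin n) (Fin n) ℂ // A.IsHermitian} | A.1.PosDef} :=
  stmt_4_general n
end
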